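/- arXiv:2302.00925 — 5 statements merged into one kernel-verified Lean document; each statement's English description precedes it below -/
import Mathlib

section
/- Let T* and C be independent real-valued random variables on a probability space (Ω, 𝓕, P), let t ∈ ℝ, and define h(u) = P(C ≥ u). Assume there is a constant c > 0 such that h(u) ≥ c for all u ≤ t. Then E[ 1{T* ≤ C} · 1{T* ≤ t} / h(T*) ] = P(T* ≤ t). -/
/-!
Independence makes the law of `(T*, C)` the product `μ ⊗ ν` of the marginals. Integrating the
weight `1{x ≤ y} · 1{x ≤ t} / h(x)` first in the censoring variable `y` gives
`ν[x, ∞) · 1{x ≤ t} / h(x) = 1{x ≤ t}`, because `h(x) = ν[x, ∞)` is exactly the probability of not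
being censored before `x`; integrating in `x` then leaves `μ(-∞, t]`. The lower bound `c` keeps the
weight bounded, which justifies Fubini, and keeps `h(x)` away from `0` for `x ≤ t`.
-/

open MeasureTheory ProbabilityTheory Set

lemma integral_ite_one_zero {α : Type*} [MeasurableSpace α] (ν : Measure α) {p : α → Prop}
    [DecidablePred p] (hp : MeasurableSet {y | p y}) :
    ∫ y, (if p y then (1 : ℝ) else 0) ∂ν = ν.real {y | p y} := by
  simpa [Set.indicator_apply] using integral_indicator_const (μ := ν) (1 : ℝ) hp

lemma antitone_measureReal_Ici (ν : Measure ℝ) [IsFiniteMeasure ν] :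
    Antitone fun u => ν.real (Ici u) :=
  fun _ _ huv => measureReal_mono (Ici_subset_Ici.2 huv)

lemma integral_ite_le_mul_div_measureReal_Ici (ν : Measure ℝ) {x : ℝ}
    (hx : ν.real (Ici x) ≠ 0) (a : ℝ) :
    ∫ y, (if x ≤ y then (1 : ℝ) else 0) * a / ν.real (Ici x) ∂ν = a := by
  have hind : ∫ y, (if x ≤ y then (1 : ℝ) else 0) ∂ν = ν.real (Ici x) :=
    integral_ite_one_zero ν measurableSet_Ici
  simp_rw [mul_div_assoc]
  rw [integral_mul_const, hind]
  field_simp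

noncomputable def ipcwWeight (ν : Measure ℝ) (t : ℝ) (p : ℝ × ℝ) : ℝ :=
  (if p.1 ≤ p.2 then (1 : ℝ) else 0) * (if p.1 ≤ t then (1 : ℝ) else 0) / ν.real (Ici p.1)

lemma measurable_ipcwWeight (ν : Measure ℝ) [IsFiniteMeasure ν] (t : ℝ) :
    Measurable (ipcwWeight ν t) := by
  refine Measurable.div ?_ ((antitone_measureReal_Ici ν).measurable.comp measurable_fst)
  exact (Measurable.ite (measurableSet_le measurable_fst measurable_snd) measurable_const
    measurable_const).mul (Measurable.ite (measurableSet_le measurable_fst measurable_const)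
    measurable_const measurable_const)

lemma norm_ipcwWeight_le {ν : Measure ℝ} {t c : ℝ} (hc : 0 < c)
    (hcbd : ∀ u ≤ t, c ≤ ν.real (Ici u)) (p : ℝ × ℝ) :
    ‖ipcwWeight ν t p‖ ≤ c⁻¹ := by
  by_cases hpt : p.1 ≤ t
  · have hcp := hcbd _ hpt
    have hnum : (if p.1 ≤ p.2 then (1 : ℝ) else 0) * (if p.1 ≤ t then (1 : ℝ) else 0) ≤ 1 := by
      split_ifs <;> norm_num
    rw [ipcwWeight, Real.norm_of_nonneg (by positivity), div_eq_mul_inv]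
    exact (mul_le_of_le_one_left (by positivity) hnum).trans (inv_anti₀ hc hcp)
  · simp [ipcwWeight, hpt, hc.le]

lemma integral_ipcwWeight_right (ν : Measure ℝ) {t : ℝ} (hν : ∀ u ≤ t, ν.real (Ici u) ≠ 0)
    (x : ℝ) : ∫ y, ipcwWeight ν t (x, y) ∂ν = if x ≤ t then 1 else 0 := by
  by_cases hxt : x ≤ t
  · simpa [ipcwWeight, hxt] using integral_ite_le_mul_div_measureReal_Ici ν (hν x hxt) 1
  · simp [ipcwWeight, hxt]

lemma integral_ipcwWeight_prod (μ ν : Measure ℝ) [IsFiniteMeasure μ] [IsFiniteMeasure ν]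
    {t c : ℝ} (hc : 0 < c) (hcbd : ∀ u ≤ t, c ≤ ν.real (Ici u)) :
    ∫ p, ipcwWeight ν t p ∂(μ.prod ν) = μ.real (Iic t) := by
  have hint : Integrable (ipcwWeight ν t) (μ.prod ν) :=
    (integrable_const c⁻¹).mono' (measurable_ipcwWeight ν t).aestronglyMeasurable
      (.of_forall (norm_ipcwWeight_le hc hcbd))
  rw [integral_prod _ hint]
  simp_rw [integral_ipcwWeight_right ν fun u hu => (hc.trans_le (hcbd u hu)).ne']
  exact integral_ite_one_zero μ measurableSet_Iic

/-- IPCW unbiasedness: for independent `T*` and `C`, with `h u = P(C ≥ u)` bounded below by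
`c > 0` on `(-∞, t]`, `E[ 1{T* ≤ C} · 1{T* ≤ t} / h(T*) ] = P(T* ≤ t)`. -/
theorem stmt_3 {Ω : Type*} [mΩ : MeasurableSpace Ω] (P : Measure Ω) [IsProbabilityMeasure P]
    (T C : Ω → ℝ) (hT : Measurable T) (hC : Measurable C)
    (hTC : ProbabilityTheory.IndepFun T C P)
    (t : ℝ) (h : ℝ → ℝ) (hh : ∀ u, h u = (P {ω | u ≤ C ω}).toReal)
    (c : ℝ) (hc : 0 < c) (hcbd : ∀ u ≤ t, c ≤ h u) :
    ∫ ω, (if T ω ≤ C ω then (1 : ℝ) else 0) * (if T ω ≤ t then (1 : ℝ) else 0) / h (T ω) ∂P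
      = (P {ω | T ω ≤ t}).toReal := by
  have h_eq : h = fun u => (P.map C).real (Ici u) := by
    funext u
    rw [hh, map_measureReal_apply hC measurableSet_Ici]
    rfl
  subst h_eq
  have hlaw : P.map (fun ω => (T ω, C ω)) = (P.map T).prod (P.map C) :=
    hTC.map_prod_eq_prod_map_map hT.aemeasurable hC.aemeasurable
  calc _ = ∫ ω, ipcwWeight (P.map C) t (T ω, C ω) ∂P := rfl
    _ = ∫ p, ipcwWeight (P.map C) t p ∂((P.map T).prod (P.map C)) := by
      rw [← hlaw, integral_map (hT.prodMk hC).aemeasurable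
        (measurable_ipcwWeight _ t).aestronglyMeasurable]
    _ = (P.map T).real (Iic t) := integral_ipcwWeight_prod _ _ hc hcbd
    _ = _ := map_measureReal_apply hT measurableSet_Iic
end

section
/- Let T* be a real-valued random variable and X a random variable with values in a measurable space E, both on a probability space (Ω, 𝓕, P), and let C be a real-valued random variable independent of the pair (T*, X). Let t ∈ ℝ, define h(u) = P(C ≥ u), and assume there is c > 0 with h(u) ≥ c for all u ≤ t. Then E[ 1{T* ≤ C} · 1{T* ≤ t} / h(T*) | σ(X) ] = E[ 1{T* ≤ t} | σ(X) ] almost surely. -/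
/-!
Sets `{X ∈ B}` generate `σ(X)`, so it suffices to compare the integrals of both sides over them.
Since `C` is independent of `(T*, X)`, Fubini lets one integrate out `C` first: the censoring
indicator `1{T* ≤ C}` averages to `h(T*)`, which cancels the weight `1 / h(T*)` on `{T* ≤ t}`,
where `h ≥ c > 0`.
-/

open MeasureTheory ProbabilityTheory

namespace ProbabilityTheory

variable {Ω α β F : Type*} {mΩ : MeasurableSpace Ω} {P : Measure Ω} [IsFiniteMeasure P]
  [MeasurableSpace α] [MeasurableSpace β]

theorem IndepFun.integral_comp_eq_integral_integral [NormedAddCommGroup F] [NormedSpace ℝ F]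
    {C : Ω → α} {Y : Ω → β} (hCY : IndepFun C Y P) (hC : Measurable C) (hY : Measurable Y)
    {G : α × β → F} (hGm : StronglyMeasurable G)
    (hG : Integrable G ((P.map C).prod (P.map Y))) :
    ∫ ω, G (C ω, Y ω) ∂P = ∫ ω, ∫ ω', G (C ω', Y ω) ∂P ∂P := by
  have hmap := (indepFun_iff_map_prod_eq_prod_map_map hC.aemeasurable hY.aemeasurable).mp hCY
  rw [← integral_map (hC.prodMk hY).aemeasurable hGm.aestronglyMeasurable, hmap,
    integral_prod_symm G hG,
    integral_map hY.aemeasurable hG.integral_prod_right.aestronglyMeasurable]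
  refine integral_congr_ae (Filter.Eventually.of_forall fun y => ?_)
  exact integral_map hC.aemeasurable
    (hGm.comp_measurable measurable_prodMk_right).aestronglyMeasurable

theorem IndepFun.integral_ite_le_mul {C : Ω → ℝ} {Y : Ω → β} (hCY : IndepFun C Y P)
    (hC : Measurable C) (hY : Measurable Y) {S φ : β → ℝ} (hS : Measurable S)
    (hφm : Measurable φ) (hφ : Integrable φ (P.map Y)) :
    ∫ ω, (if S (Y ω) ≤ C ω then 1 else 0) * φ (Y ω) ∂P
      = ∫ ω, P.real {ω' | S (Y ω) ≤ C ω'} * φ (Y ω) ∂P := by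
  have hGm : Measurable fun p : ℝ × β => (if S p.2 ≤ p.1 then (1 : ℝ) else 0) * φ p.2 :=
    (measurable_const.ite (measurableSet_le (hS.comp measurable_snd) measurable_fst)
      measurable_const).mul (hφm.comp measurable_snd)
  have hG : Integrable (fun p : ℝ × β => (if S p.2 ≤ p.1 then (1 : ℝ) else 0) * φ p.2)
      ((P.map C).prod (P.map Y)) :=
    (hφ.comp_snd _).mono hGm.aestronglyMeasurable
      (.of_forall fun p => by split_ifs <;> simp)
  rw [hCY.integral_comp_eq_integral_integral hC hY hGm.stronglyMeasurable hG]
  congr 1 with ω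
  dsimp only
  rw [integral_mul_const, ← integral_indicator_one (measurableSet_le measurable_const hC)]
  rfl

end ProbabilityTheory

namespace MeasureTheory

variable {Ω F : Type*} {m mΩ : MeasurableSpace Ω} {P : Measure Ω} [IsFiniteMeasure P]

theorem measurable_measureReal_setOf_le (C : Ω → ℝ) :
    Measurable fun u => P.real {ω | u ≤ C ω} :=
  Antitone.measurable fun _ _ huv =>
    measureReal_mono (fun _ hω => le_trans huv hω)

theorem condExp_congr_of_forall_setIntegral_eq [NormedAddCommGroup F] [NormedSpace ℝ F]
    [CompleteSpace F] {f g : Ω → F} (hm : m ≤ mΩ)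
    (hf : Integrable f P) (hg : Integrable g P)
    (hfg : ∀ s, MeasurableSet[m] s → ∫ ω in s, f ω ∂P = ∫ ω in s, g ω ∂P) :
    P[f|m] =ᵐ[P] P[g|m] :=
  (ae_eq_condExp_of_forall_setIntegral_eq hm hf (fun _ _ _ => integrable_condExp.integrableOn)
    (fun s hs _ => by rw [setIntegral_condExp hm hg hs, hfg s hs])
    stronglyMeasurable_condExp.aestronglyMeasurable).symm

end MeasureTheory

theorem norm_ite_one_zero_le (p : Prop) [Decidable p] :
    ‖(if p then (1 : ℝ) else 0)‖ ≤ 1 := by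
  split_ifs <;> simp

section Truncation

variable {h : ℝ → ℝ} {t c : ℝ}

theorem norm_mul_ite_le_div_le (hc : 0 < c) (hcbd : ∀ u ≤ t, c ≤ h u) {a : ℝ} (ha : ‖a‖ ≤ 1)
    (s : ℝ) : ‖a * ((if s ≤ t then 1 else 0) / h s)‖ ≤ c⁻¹ := by
  split_ifs with hs
  · have hpos : 0 < h s := hc.trans_le (hcbd s hs)
    rw [norm_mul, norm_div, norm_one, Real.norm_of_nonneg hpos.le, mul_one_div]
    exact (div_le_div_of_nonneg_right ha hpos.le).trans
      (by simpa using inv_anti₀ hc (hcbd s hs))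
  · simpa using hc.le

theorem mul_ite_le_div_cancel (hc : 0 < c) (hcbd : ∀ u ≤ t, c ≤ h u) (s : ℝ) :
    h s * ((if s ≤ t then 1 else 0) / h s) = if s ≤ t then 1 else 0 := by
  split_ifs with hs
  · exact mul_div_cancel₀ 1 (hc.trans_le (hcbd s hs)).ne'
  · simp

end Truncation

/-- Conditional IPCW unbiasedness given the covariates: if `C` is independent of `(T*, X)` and
`h u = P(C ≥ u) ≥ c > 0` for `u ≤ t`, then
`E[ 1{T* ≤ C} · 1{T* ≤ t} / h(T*) | σ(X) ] = E[ 1{T* ≤ t} | σ(X) ]` a.s. -/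
theorem stmt_4 {Ω : Type*} [mΩ : MeasurableSpace Ω] (P : Measure Ω) [IsProbabilityMeasure P]
    {E : Type*} [mE : MeasurableSpace E]
    (T : Ω → ℝ) (X : Ω → E) (C : Ω → ℝ)
    (hT : Measurable T) (hX : Measurable X) (hC : Measurable C)
    (hTXC : ProbabilityTheory.IndepFun C (fun ω => (T ω, X ω)) P)
    (t : ℝ) (h : ℝ → ℝ) (hh : ∀ u, h u = (P {ω | u ≤ C ω}).toReal)
    (c : ℝ) (hc : 0 < c) (hcbd : ∀ u ≤ t, c ≤ h u) :
    P[fun ω => (if T ω ≤ C ω then (1 : ℝ) else 0) * (if T ω ≤ t then (1 : ℝ) else 0)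
        / h (T ω) | MeasurableSpace.comap X mE]
      =ᵐ[P] P[fun ω => (if T ω ≤ t then (1 : ℝ) else 0) | MeasurableSpace.comap X mE] := by
  have h_meas : Measurable h := by
    rw [show h = _ from funext hh]
    exact measurable_measureReal_setOf_le C
  have hw : Measurable fun s => (if s ≤ t then (1 : ℝ) else 0) / h s :=
    (measurable_const.ite measurableSet_Iic measurable_const).div h_meas
  simp only [mul_div_assoc]
  refine condExp_congr_of_forall_setIntegral_eq hX.comap_le ?_ ?_ ?_
  · exact .of_bound ((measurable_const.ite (measurableSet_le hT hC) measurable_const).mul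
      (hw.comp hT)).aestronglyMeasurable c⁻¹
      (.of_forall fun _ => norm_mul_ite_le_div_le hc hcbd (norm_ite_one_zero_le _) _)
  · exact .of_bound (measurable_const.ite (measurableSet_le hT measurable_const)
      measurable_const).aestronglyMeasurable 1 (.of_forall fun _ => norm_ite_one_zero_le _)
  rintro _ ⟨B, hB, rfl⟩
  have hφ : Measurable fun p : ℝ × E =>
      B.indicator 1 p.2 * ((if p.1 ≤ t then 1 else 0) / h p.1) :=
    ((measurable_one.indicator hB).comp measurable_snd).mul (hw.comp measurable_fst)
  have key := hTXC.integral_ite_le_mul hC (hT.prodMk hX) measurable_fst hφ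
    (.of_bound hφ.aestronglyMeasurable c⁻¹ (.of_forall fun _ => norm_mul_ite_le_div_le hc hcbd
      ((norm_indicator_le_norm_self _ _).trans (by simp)) _))
  simp only [measureReal_def, ← hh] at key
  rw [← integral_indicator (hX hB), ← integral_indicator (hX hB)]
  convert key using 2 with ω ω
  · funext ω
    by_cases hω : X ω ∈ B <;> simp [hω]
  · funext ω
    rw [mul_left_comm, mul_ite_le_div_cancel hc hcbd]
    by_cases hω : X ω ∈ B <;> simp [hω]
end

section
/- Let T* and C be independent real-valued random variables on a probability space (Ω, 𝓕, P), let t ∈ ℝ, define h(u) = P(C ≥ u), and assume there is c > 0 with h(u) ≥ c for all u ≤ t. Then E[ ( 1{T* ≤ C} · 1{T* ≤ t} / h(T*) )² ] = E[ 1{T* ≤ t} / h(T*) ]. -/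
/-!
Because `1{T ≤ C}` is an indicator, the squared integrand is `1{T ≤ C} · w(T)²` with
`w u = 1{u ≤ t} / h u`. Independence makes the joint law of `(T, C)` a product measure, so
integrating out `C` first (Tonelli, all integrands being nonnegative) replaces `1{T ≤ C}`
by `h T`.
Finally `w u ² · h u = w u`, also where `h u = 0`, since then `w u = 0` by `x / 0 = 0`.
-/

open MeasureTheory ProbabilityTheory

namespace ProbabilityTheory

variable {Ω α β : Type*} {mΩ : MeasurableSpace Ω} {P : Measure Ω} [IsFiniteMeasure P]

theorem antitone_measureReal_le (C : Ω → ℝ) : Antitone fun u => P.real {ω | u ≤ C ω} :=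
  fun _ _ huv => measureReal_mono fun _ hω => huv.trans hω

theorem IndepFun.lintegral_comp_prod [MeasurableSpace α] [MeasurableSpace β]
    {X : Ω → α} {Y : Ω → β} (hX : Measurable X) (hY : Measurable Y) (hXY : IndepFun X Y P)
    {f : α × β → ENNReal} (hf : Measurable f) :
    ∫⁻ ω, f (X ω, Y ω) ∂P = ∫⁻ ω, ∫⁻ ω', f (X ω, Y ω') ∂P ∂P := by
  rw [← lintegral_map hf (hX.prodMk hY),
    hXY.map_prod_eq_prod_map_map hX.aemeasurable hY.aemeasurable, lintegral_prod _ hf.aemeasurable,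
    lintegral_map hf.lintegral_prod_right' hX]
  exact lintegral_congr fun ω => lintegral_map (hf.comp measurable_prodMk_left) hY

theorem IndepFun.integral_ite_le_mul_s5 {T C : Ω → ℝ} (hT : Measurable T) (hC : Measurable C)
    (hTC : IndepFun T C P) {g : ℝ → ℝ} (hg : Measurable g) (hg₀ : 0 ≤ g) :
    ∫ ω, (if T ω ≤ C ω then 1 else 0) * g (T ω) ∂P
      = ∫ ω, g (T ω) * P.real {ω' | T ω ≤ C ω'} ∂P := by
  have h_inner (x : ℝ) : ∫⁻ ω', ENNReal.ofReal ((if x ≤ C ω' then 1 else 0) * g x) ∂P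
      = ENNReal.ofReal (g x * P.real {ω' | x ≤ C ω'}) :=
    calc _ = ∫⁻ ω', {ω' | x ≤ C ω'}.indicator (fun _ => ENNReal.ofReal (g x)) ω' ∂P :=
          lintegral_congr fun ω' => by by_cases hx : x ≤ C ω' <;> simp [hx]
      _ = ENNReal.ofReal (g x) * P {ω' | x ≤ C ω'} :=
          lintegral_indicator_const (measurableSet_le measurable_const hC) _
      _ = _ := by rw [ENNReal.ofReal_mul (hg₀ x), ofReal_measureReal]
  have h_meas := (antitone_measureReal_le (P := P) C).measurable
  rw [integral_eq_lintegral_of_nonneg_ae, integral_eq_lintegral_of_nonneg_ae]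
  · congr 1
    rw [hTC.lintegral_comp_prod hT hC
      (f := fun p => ENNReal.ofReal ((if p.1 ≤ p.2 then 1 else 0) * g p.1))]
    · exact lintegral_congr fun ω => h_inner (T ω)
    · exact ENNReal.measurable_ofReal.comp
        ((Measurable.ite (measurableSet_le measurable_fst measurable_snd)
          measurable_const measurable_const).mul (hg.comp measurable_fst))
  · exact ae_of_all _ fun ω => mul_nonneg (hg₀ _) measureReal_nonneg
  · exact ((hg.comp hT).mul (h_meas.comp hT)).aestronglyMeasurable
  · exact ae_of_all _ fun ω => mul_nonneg (by split_ifs <;> norm_num) (hg₀ _)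
  · exact ((Measurable.ite (measurableSet_le hT hC) measurable_const measurable_const).mul
      (hg.comp hT)).aestronglyMeasurable

end ProbabilityTheory

theorem div_sq_mul_self_of_sq_eq_self {K : Type*} [Field K] {a d : K} (ha : a ^ 2 = a) :
    (a / d) ^ 2 * d = a / d := by
  rcases eq_or_ne d 0 with rfl | hd
  · simp
  · rw [div_pow, ha, sq d, ← div_div, div_mul_cancel₀ _ hd]

theorem stmt_5_general {Ω : Type*} [mΩ : MeasurableSpace Ω] (P : Measure Ω) [IsProbabilityMeasure P]
    (T C : Ω → ℝ) (hT : Measurable T) (hC : Measurable C)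
    (hTC : ProbabilityTheory.IndepFun T C P)
    (t : ℝ) (h : ℝ → ℝ) (hh : ∀ u, h u = (P {ω | u ≤ C ω}).toReal) :
    ∫ ω, ((if T ω ≤ C ω then (1 : ℝ) else 0) * (if T ω ≤ t then (1 : ℝ) else 0) / h (T ω)) ^ 2 ∂P
      = ∫ ω, (if T ω ≤ t then (1 : ℝ) else 0) / h (T ω) ∂P := by
  obtain rfl : h = fun u => P.real {ω | u ≤ C ω} := funext hh
  set w : ℝ → ℝ := fun x => (if x ≤ t then 1 else 0) / P.real {ω | x ≤ C ω}
  have hw : Measurable w := (Measurable.ite measurableSet_Iic measurable_const measurable_const).div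
    (antitone_measureReal_le C).measurable
  calc _ = ∫ ω, (if T ω ≤ C ω then 1 else 0) * w (T ω) ^ 2 ∂P :=
        integral_congr_ae <| ae_of_all _ fun ω => by simp only [w]; split_ifs <;> ring
    _ = ∫ ω, w (T ω) ^ 2 * P.real {ω' | T ω ≤ C ω'} ∂P :=
        hTC.integral_ite_le_mul_s5 hT hC (hw.pow_const 2) fun _ => sq_nonneg _
    _ = _ := integral_congr_ae <| ae_of_all _ fun ω =>
        div_sq_mul_self_of_sq_eq_self (by split_ifs <;> norm_num)

/-- Second moment of the IPCW-weighted single-event indicator: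
`E[ ( 1{T* ≤ C} · 1{T* ≤ t} / h(T*) )² ] = E[ 1{T* ≤ t} / h(T*) ]` for independent `T*, C`. -/
theorem stmt_5 {Ω : Type*} [mΩ : MeasurableSpace Ω] (P : Measure Ω) [IsProbabilityMeasure P]
    (T C : Ω → ℝ) (hT : Measurable T) (hC : Measurable C)
    (hTC : ProbabilityTheory.IndepFun T C P)
    (t : ℝ) (h : ℝ → ℝ) (hh : ∀ u, h u = (P {ω | u ≤ C ω}).toReal)
    (c : ℝ) (hc : 0 < c) (hcbd : ∀ u ≤ t, c ≤ h u) :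
    ∫ ω, ((if T ω ≤ C ω then (1 : ℝ) else 0) * (if T ω ≤ t then (1 : ℝ) else 0) / h (T ω)) ^ 2 ∂P
      = ∫ ω, (if T ω ≤ t then (1 : ℝ) else 0) / h (T ω) ∂P :=
  stmt_5_general (mΩ := mΩ) P T C hT hC hTC t h hh
end

section
/- Let T* be a real-valued random variable and X a random variable with values in a measurable space E, both on a probability space (Ω, 𝓕, P), and let C be a real-valued random variable independent of the pair (T*, X). Let t ∈ ℝ, define h(u) = P(C ≥ u), and assume there is c > 0 with h(u) ≥ c for all u ≤ t. Then E[ 1{T* ≤ C} · 1{T* ≤ t} / h(T*) | σ(T*, X) ] = 1{T* ≤ t} almost surely. -/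
/-!
Conditionally on `Y = (T*, X)`, the censoring time `C` still has its unconditional law `μ_C`,
because it is independent of `Y`. Hence the conditional expectation of `w(T*, C)` given `Y` is
`∫ w(T*, v) dμ_C(v)`, and for the IPCW weight `w(u, v) = 1{u ≤ v} 1{u ≤ t} / h(u)` this integral
is `μ_C[u, ∞) · 1{u ≤ t} / h(u) = 1{u ≤ t}`, since `h(u) = μ_C[u, ∞)` does not vanish for `u ≤ t`.
-/

open MeasureTheory Set

namespace ProbabilityTheory

section Freezing

variable {α β Ω F : Type*} {mα : MeasurableSpace α} {mβ : MeasurableSpace β} [MeasurableSpace Ω]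
  [StandardBorelSpace Ω] [Nonempty Ω] {μ : Measure α} [IsFiniteMeasure μ] {X : α → β} {Y : α → Ω}

lemma condDistrib_ae_eq_const_of_indepFun (hX : AEMeasurable X μ) (hY : AEMeasurable Y μ)
    (hXY : IndepFun X Y μ) :
    condDistrib Y X μ =ᵐ[μ.map X] Kernel.const β (μ.map Y) := by
  refine condDistrib_ae_eq_of_measure_eq_compProd X hY ?_
  rw [Measure.compProd_const, (indepFun_iff_map_prod_eq_prod_map_map hX hY).mp hXY]

theorem condExp_prod_ae_eq_integral_of_indepFun [NormedAddCommGroup F] [NormedSpace ℝ F]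
    [CompleteSpace F] (hX : Measurable X) (hY : AEMeasurable Y μ) (hXY : IndepFun X Y μ)
    {f : β × Ω → F} (hf : Integrable f (μ.map fun a => (X a, Y a))) :
    μ[fun a => f (X a, Y a) | mβ.comap X] =ᵐ[μ] fun a => ∫ y, f (X a, y) ∂(μ.map Y) := by
  filter_upwards [condExp_prod_ae_eq_integral_condDistrib' hX hY hf,
    ae_of_ae_map hX.aemeasurable
      (condDistrib_ae_eq_const_of_indepFun hX.aemeasurable hY hXY)] with a hcond hconst
  rw [hcond, hconst, Kernel.const_apply]

end Freezing

section IPCW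

/-- Inverse-probability-of-censoring weight of an event time `u` under censoring time `v`,
truncated at the horizon `t`. -/
noncomputable def ipcwWeight (h : ℝ → ℝ) (t u v : ℝ) : ℝ :=
  (if u ≤ v then 1 else 0) * (if u ≤ t then 1 else 0) / h u

variable {h : ℝ → ℝ} {t : ℝ}

lemma measurable_ipcwWeight (hh : Measurable h) :
    Measurable fun p : ℝ × ℝ => ipcwWeight h t p.1 p.2 := by
  unfold ipcwWeight
  refine Measurable.div ?_ (hh.comp measurable_fst)
  exact (measurable_const.ite (measurableSet_le measurable_fst measurable_snd) measurable_const).mul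
    (measurable_const.ite (measurableSet_le measurable_fst measurable_const) measurable_const)

lemma norm_ipcwWeight_le {c : ℝ} (hc : 0 < c) (hcbd : ∀ u ≤ t, c ≤ h u) (u v : ℝ) :
    ‖ipcwWeight h t u v‖ ≤ 1 / c := by
  unfold ipcwWeight
  by_cases hut : u ≤ t
  · have hcu := hcbd u hut
    split_ifs
    · rw [one_mul, Real.norm_of_nonneg (by linarith [one_div_pos.mpr (hc.trans_le hcu)])]
      exact one_div_le_one_div_of_le hc hcu
    · simp only [zero_mul, zero_div, norm_zero]
      positivity
  · simp only [hut, if_false, mul_zero, zero_div, norm_zero]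
    positivity

lemma integral_ipcwWeight (ν : Measure ℝ) [IsFiniteMeasure ν] {u : ℝ}
    (hh : h u = ν.real (Ici u)) (hpos : u ≤ t → h u ≠ 0) :
    ∫ v, ipcwWeight h t u v ∂ν = if u ≤ t then 1 else 0 := by
  unfold ipcwWeight
  by_cases hut : u ≤ t
  · have hsurv : ∫ v, (if u ≤ v then (1 : ℝ) else 0) ∂ν = ν.real (Ici u) := by
      rw [← integral_indicator_one measurableSet_Ici]
      rfl
    simp only [hut, if_true, mul_one, integral_div, hsurv, ← hh]
    exact div_self (hpos hut)
  · simp [hut]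

end IPCW

end ProbabilityTheory

open ProbabilityTheory

/-- Key conditional-expectation identity behind Equations (3) and (17) of the paper: if `C` is
independent of `(T*, X)` and `h u = P(C ≥ u) ≥ c > 0` for `u ≤ t`, then
`E[ 1{T* ≤ C} · 1{T* ≤ t} / h(T*) | σ(T*, X) ] = 1{T* ≤ t}` almost surely. -/
theorem stmt_11 {Ω : Type*} [mΩ : MeasurableSpace Ω] (P : Measure Ω) [IsProbabilityMeasure P]
    {E : Type*} [mE : MeasurableSpace E]
    (T : Ω → ℝ) (X : Ω → E) (C : Ω → ℝ)
    (hT : Measurable T) (hX : Measurable X) (hC : Measurable C)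
    (hTXC : ProbabilityTheory.IndepFun C (fun ω => (T ω, X ω)) P)
    (t : ℝ) (h : ℝ → ℝ) (hh : ∀ u, h u = (P {ω | u ≤ C ω}).toReal)
    (c : ℝ) (hc : 0 < c) (hcbd : ∀ u ≤ t, c ≤ h u) :
    P[fun ω => (if T ω ≤ C ω then (1 : ℝ) else 0) * (if T ω ≤ t then (1 : ℝ) else 0)
        / h (T ω) | MeasurableSpace.comap (fun ω => (T ω, X ω)) inferInstance]
      =ᵐ[P] fun ω => if T ω ≤ t then (1 : ℝ) else 0 := by
  have hsurv : ∀ u, h u = (P.map C).real (Ici u) := fun u => by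
    rw [hh, map_measureReal_apply hC measurableSet_Ici]
    rfl
  have hmeas : Measurable h := by
    refine Antitone.measurable fun u v huv => ?_
    simp only [hsurv]
    exact measureReal_mono (Ici_subset_Ici.mpr huv)
  have hint : Integrable (fun q : (ℝ × E) × ℝ => ipcwWeight h t q.1.1 q.2)
      (P.map fun ω => ((T ω, X ω), C ω)) :=
    Integrable.of_bound
      ((measurable_ipcwWeight hmeas).comp
        (measurable_fst.fst.prodMk measurable_snd)).aestronglyMeasurable
      (1 / c) (ae_of_all _ fun q => norm_ipcwWeight_le hc hcbd _ _)
  refine (condExp_prod_ae_eq_integral_of_indepFun (hT.prodMk hX) hC.aemeasurable hTXC.symm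
    hint).trans (ae_of_all _ fun ω => integral_ipcwWeight _ (hsurv _) fun hωt => ?_)
  exact (hc.trans_le (hcbd _ hωt)).ne'
end

section
/- Let (E, 𝓔) be a measurable space, ν a probability measure on E, and μ : E → ℝ a bounded measurable function. On a probability space (Ω, 𝓕, P), let (X_i)_{i ∈ ℕ} be independent identically distributed E-valued random variables with law ν. Let M > 0 and let (μ̂_n)_{n ∈ ℕ} be random functions μ̂_n : Ω → (E → ℝ) such that for every ω and n the function μ̂_n(ω) is measurable with |μ̂_n(ω)(x)| ≤ M for all x, the map ω ↦ sup_{x ∈ E} |μ̂_n(ω)(x) − μ(x)| is measurable, and sup_{x ∈ E} |μ̂_n(x) − μ(x)| → 0 in probability as n → ∞. Then (1/n) Σ_{i=1}^n μ̂_n(X_i)² → ∫_E μ² dν in probability as n → ∞. -/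
open MeasureTheory Filter

/-! By the strong law of large numbers, `(1/n) Σ μ(X_i)²` converges almost surely, hence in
probability, to `∫ μ² dν`. Since `|μ̂_n² - μ²| = |μ̂_n + μ| |μ̂_n - μ| ≤ (M + Cμ) sup |μ̂_n - μ|`,
the average of the `μ̂_n(X_i)²` differs from it by at most `(M + Cμ)` times a quantity that tends
to zero in probability. -/

namespace MeasureTheory.TendstoInMeasure

variable {ι α : Type*} [MeasurableSpace α] {μ : Measure α} {l : Filter ι}

theorem const_smul {𝕜 E : Type*} [NormedField 𝕜] [SeminormedAddCommGroup E] [NormedSpace 𝕜 E]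
    {f : ι → α → E} {g : α → E} (hfg : TendstoInMeasure μ f l g) (c : 𝕜) :
    TendstoInMeasure μ (fun i x => c • f i x) l (fun x => c • g x) := by
  rcases eq_or_ne c 0 with rfl | hc
  · simp only [zero_smul]
    exact tendstoInMeasure_iff_dist.2 fun ε hε => by simpa [not_le.2 hε] using tendsto_const_nhds
  rw [tendstoInMeasure_iff_dist] at hfg ⊢
  intro ε hε
  have hc' : 0 < ‖c‖ := norm_pos_iff.2 hc
  convert hfg (ε / ‖c‖) (div_pos hε hc') using 4 with i x
  simp only [dist_smul₀, div_le_iff₀ hc', mul_comm]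

theorem of_eventually_dist_le {E : Type*} [PseudoMetricSpace E] {f g : ι → α → E} {c : α → E}
    {h : ι → α → ℝ} (hf : TendstoInMeasure μ f l c) (hh : TendstoInMeasure μ h l fun _ => 0)
    (hdist : ∀ᶠ i in l, ∀ x, dist (g i x) (f i x) ≤ h i x) :
    TendstoInMeasure μ g l c := by
  rw [tendstoInMeasure_iff_dist] at hf hh ⊢
  simp only [Real.dist_0_eq_abs] at hh
  intro ε hε
  have hsub : ∀ᶠ i in l, {x | ε ≤ dist (g i x) (c x)} ⊆
      {x | ε / 2 ≤ |h i x|} ∪ {x | ε / 2 ≤ dist (f i x) (c x)} := by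
    filter_upwards [hdist] with i hi x hx
    by_contra! hnot
    simp only [Set.mem_union, Set.mem_ofPred_eq, not_or, not_le] at hnot hx
    linarith [dist_triangle (g i x) (f i x) (c x), hi x, le_abs_self (h i x)]
  refine tendsto_of_tendsto_of_tendsto_of_le_of_le' tendsto_const_nhds
    (by simpa using (hh _ (half_pos hε)).add (hf _ (half_pos hε)))
    (Eventually.of_forall fun _ => zero_le) ?_
  filter_upwards [hsub] with i hi
  exact (measure_mono hi).trans (measure_union_le _ _)

end MeasureTheory.TendstoInMeasure

theorem ProbabilityTheory.tendstoInMeasure_average_comp_of_iid {Ω E : Type*} [MeasurableSpace Ω]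
    [mE : MeasurableSpace E] {P : Measure Ω} [IsProbabilityMeasure P] {ν : Measure E}
    {X : ℕ → Ω → E} (hX : ∀ i, Measurable (X i)) (hindep : iIndepFun (m := fun _ => mE) X P)
    (hlaw : ∀ i, P.map (X i) = ν) {φ : E → ℝ} (hφ : Measurable φ) (hint : Integrable φ ν) :
    TendstoInMeasure P (fun (n : ℕ) ω => (1 / (n : ℝ)) * ∑ i ∈ Finset.range n, φ (X i ω)) atTop
      (fun _ => ∫ x, φ x ∂ν) := by
  have hident : ∀ i, IdentDistrib (φ ∘ X i) (φ ∘ X 0) P P := fun i =>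
    (IdentDistrib.mk (hX i).aemeasurable (hX 0).aemeasurable (by rw [hlaw, hlaw])).comp hφ
  have hmean : ∫ ω, φ (X 0 ω) ∂P = ∫ x, φ x ∂ν := by
    rw [← hlaw 0, integral_map (hX 0).aemeasurable hφ.aestronglyMeasurable]
  have hslln := strong_law_ae_real (fun i => φ ∘ X i)
    (by rw [← hlaw 0] at hint; exact hint.comp_measurable (hX 0))
    (fun i j hij => (hindep.indepFun hij).comp hφ hφ) hident
  simp only [Function.comp_apply, hmean] at hslln
  refine tendstoInMeasure_of_tendsto_ae (fun n =>
    (measurable_const.mul (Finset.measurable_sum _ fun i _ => hφ.comp (hX i))).aestronglyMeasurable)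
    (hslln.mono fun ω hω => ?_)
  simpa only [one_div_mul_eq_div] using hω

theorem abs_sq_sub_sq_le_mul_iSup_abs_sub {E : Type*} {u v : E → ℝ} {M C : ℝ}
    (hu : ∀ x, |u x| ≤ M) (hv : ∀ x, |v x| ≤ C) (x : E) :
    |u x ^ 2 - v x ^ 2| ≤ (M + C) * ⨆ y, |u y - v y| := by
  have hbdd : BddAbove (Set.range fun y => |u y - v y|) :=
    ⟨M + C, by rintro _ ⟨y, rfl⟩; exact (abs_sub _ _).trans (add_le_add (hu y) (hv y))⟩
  have hsum : |u x + v x| ≤ M + C := (abs_add_le _ _).trans (add_le_add (hu x) (hv x))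
  rw [sq_sub_sq, abs_mul]
  exact mul_le_mul hsum (le_ciSup hbdd x) (abs_nonneg _) ((abs_nonneg _).trans hsum)

theorem abs_average_sub_average_le {a b : ℕ → ℝ} {n : ℕ} {d : ℝ} (hn : n ≠ 0)
    (h : ∀ i, |a i - b i| ≤ d) :
    |1 / (n : ℝ) * ∑ i ∈ Finset.range n, a i - 1 / n * ∑ i ∈ Finset.range n, b i| ≤ d := by
  have hn' : (0 : ℝ) < n := Nat.cast_pos.2 (Nat.pos_of_ne_zero hn)
  calc _ = |∑ i ∈ Finset.range n, (a i - b i)| / n := by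
        rw [← mul_sub, ← Finset.sum_sub_distrib, abs_mul, abs_of_pos (one_div_pos.2 hn'),
          one_div_mul_eq_div]
    _ ≤ (n * d) / n := by
        gcongr
        calc |∑ i ∈ Finset.range n, (a i - b i)| ≤ ∑ i ∈ Finset.range n, |a i - b i| :=
              Finset.abs_sum_le_sum_abs _ _
          _ ≤ n * d := by simpa using Finset.sum_le_card_nsmul (Finset.range n) _ d fun i _ => h i
    _ = d := by field_simp

theorem stmt_14_general {Ω : Type*} [mΩ : MeasurableSpace Ω] (P : Measure Ω) [IsProbabilityMeasure P]
    {E : Type*} [mE : MeasurableSpace E] (ν : Measure E) [IsProbabilityMeasure ν]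
    (μ : E → ℝ) (hμmeas : Measurable μ) (Cμ : ℝ) (hμbd : ∀ x, |μ x| ≤ Cμ)
    (X : ℕ → Ω → E) (hXmeas : ∀ i, Measurable (X i))
    (hXindep : ProbabilityTheory.iIndepFun (m := fun _ => mE) X P)
    (hXlaw : ∀ i, Measure.map (X i) P = ν)
    (M : ℝ) (muhat : ℕ → Ω → E → ℝ)
    (hmuhat_bd : ∀ n ω x, |muhat n ω x| ≤ M)
    (hsup_tendsto : TendstoInMeasure P (fun n ω => ⨆ x : E, |muhat n ω x - μ x|) atTop
      (fun _ => (0 : ℝ))) :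
    TendstoInMeasure P
      (fun (n : ℕ) ω => (1 / (n : ℝ)) * ∑ i ∈ Finset.range n, (muhat n ω (X i ω)) ^ 2) atTop
      (fun _ => ∫ x, (μ x) ^ 2 ∂ν) := by
  have hsq_int : Integrable (fun x => μ x ^ 2) ν :=
    .of_bound (hμmeas.pow_const 2).aestronglyMeasurable (Cμ ^ 2) (ae_of_all _ fun x => by
      simpa only [Real.norm_eq_abs, abs_pow] using pow_le_pow_left₀ (abs_nonneg _) (hμbd x) 2)
  refine (ProbabilityTheory.tendstoInMeasure_average_comp_of_iid hXmeas hXindep hXlaw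
    (hμmeas.pow_const 2) hsq_int).of_eventually_dist_le
    (by simpa using hsup_tendsto.const_smul (M + Cμ)) ?_
  filter_upwards [eventually_ne_atTop 0] with n hn ω
  exact abs_average_sub_average_le hn fun i =>
    abs_sq_sub_sq_le_mul_iSup_abs_sub (hmuhat_bd n ω) hμbd (X i ω)

/-- Term `D₃(t)` in the proof of Proposition 2: if `μ̂_n` are uniformly bounded random functions
converging uniformly in probability to a bounded measurable `μ`, and `(X_i)` are i.i.d. with
law `ν`, then `(1/n) Σ_{i<n} μ̂_n(X_i)² → ∫ μ² dν` in probability. -/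
theorem stmt_14 {Ω : Type*} [mΩ : MeasurableSpace Ω] (P : Measure Ω) [IsProbabilityMeasure P]
    {E : Type*} [mE : MeasurableSpace E] (ν : Measure E) [IsProbabilityMeasure ν]
    (μ : E → ℝ) (hμmeas : Measurable μ) (Cμ : ℝ) (hμbd : ∀ x, |μ x| ≤ Cμ)
    (X : ℕ → Ω → E) (hXmeas : ∀ i, Measurable (X i))
    (hXindep : ProbabilityTheory.iIndepFun (m := fun _ => mE) X P)
    (hXlaw : ∀ i, Measure.map (X i) P = ν)
    (M : ℝ) (hM : 0 < M) (muhat : ℕ → Ω → E → ℝ)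
    (hmuhat_meas : ∀ n ω, Measurable (muhat n ω))
    (hmuhat_bd : ∀ n ω x, |muhat n ω x| ≤ M)
    (hsup_meas : ∀ n, Measurable (fun ω => ⨆ x : E, |muhat n ω x - μ x|))
    (hsup_tendsto : TendstoInMeasure P (fun n ω => ⨆ x : E, |muhat n ω x - μ x|) atTop
      (fun _ => (0 : ℝ))) :
    TendstoInMeasure P
      (fun (n : ℕ) ω => (1 / (n : ℝ)) * ∑ i ∈ Finset.range n, (muhat n ω (X i ω)) ^ 2) atTop
      (fun _ => ∫ x, (μ x) ^ 2 ∂ν) :=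
  stmt_14_general (mΩ := mΩ) P (mE := mE) ν μ hμmeas Cμ hμbd X hXmeas hXindep hXlaw M muhat
    hmuhat_bd hsup_tendsto
end
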